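/- Let G and H be connected graphs each of order at least 3, and let D be a minimal dominating set of G. Then D × V(H) is a minimal dominating set of the direct product G × H if and only if D is an independent set in G. -/

import Mathlib

open SimpleGraph

variable {V : Type*}

/-- Closed neighborhood of a vertex. -/
def closedNbhd (G : SimpleGraph V) (v : V) : Set V := insert v (G.neighborSet v)

/-- Closed neighborhood of a set of vertices. -/
def closedNbhdSet (G : SimpleGraph V) (A : Set V) : Set V := ⋃ a ∈ A, closedNbhd G a

/-- `D` is a dominating set of `G`. -/
def IsDomSet (G : SimpleGraph V) (D : Set V) : Prop :=
  ∀ v, ∃ u ∈ D, v ∈ closedNbhd G u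

/-- `D` is a minimal dominating set of `G`. -/
def IsMinimalDomSet (G : SimpleGraph V) (D : Set V) : Prop :=
  IsDomSet G D ∧ ∀ D' ⊆ D, IsDomSet G D' → D' = D

/-- The domination number `γ`. -/
noncomputable def domNum (G : SimpleGraph V) : ℕ :=
  sInf {n | ∃ D : Set V, IsDomSet G D ∧ D.ncard = n}

/-- The upper domination number `Γ`. -/
noncomputable def upperDomNum (G : SimpleGraph V) : ℕ :=
  sSup {n | ∃ D : Set V, IsMinimalDomSet G D ∧ D.ncard = n}

/-- A graph is well-dominated if `γ = Γ`. -/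
def WellDominated (G : SimpleGraph V) : Prop := domNum G = upperDomNum G

/-- `A` is an independent set of `G`. -/
def IsIndep (G : SimpleGraph V) (A : Set V) : Prop :=
  ∀ u ∈ A, ∀ v ∈ A, ¬ G.Adj u v

/-- `A` is a maximal independent set of `G`. -/
def IsMaxIndep (G : SimpleGraph V) (A : Set V) : Prop :=
  IsIndep G A ∧ ∀ B, IsIndep G B → A ⊆ B → B = A

/-- The independence number `α`. -/
noncomputable def indepNum (G : SimpleGraph V) : ℕ :=
  sSup {n | ∃ A : Set V, IsIndep G A ∧ A.ncard = n}

/-- The strong product of two graphs. -/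
def strongProd {α β : Type*} (G : SimpleGraph α) (H : SimpleGraph β) :
    SimpleGraph (α × β) where
  Adj x y := x ≠ y ∧ (x.1 = y.1 ∨ G.Adj x.1 y.1) ∧ (x.2 = y.2 ∨ H.Adj x.2 y.2)
  symm := by
    constructor
    rintro x y ⟨h1, h2, h3⟩
    refine ⟨h1.symm, ?_, ?_⟩
    · cases h2 with
      | inl h => exact Or.inl h.symm
      | inr h => exact Or.inr h.symm
    · cases h3 with
      | inl h => exact Or.inl h.symm
      | inr h => exact Or.inr h.symm
  loopless := by constructor; rintro x ⟨h1, _⟩; exact h1 rfl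

/-- The direct (tensor) product of two graphs. -/
def tensorProd {α β : Type*} (G : SimpleGraph α) (H : SimpleGraph β) :
    SimpleGraph (α × β) where
  Adj x y := G.Adj x.1 y.1 ∧ H.Adj x.2 y.2
  symm := ⟨fun _ _ h => ⟨h.1.symm, h.2.symm⟩⟩
  loopless := ⟨fun _ h => G.loopless.irrefl _ h.1⟩

/-- The corona `G ⊙ K₁`. -/
def corona {α : Type*} (G : SimpleGraph α) : SimpleGraph (α ⊕ α) :=
  SimpleGraph.fromRel (fun x y =>
    match x, y with
    | Sum.inl u, Sum.inl v => G.Adj u v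
    | Sum.inl u, Sum.inr v => u = v
    | _, _ => False)

/-- The private neighborhood `pn[u,D] = N[u] - N[D - {u}]`. -/
def privateNbhd (G : SimpleGraph V) (D : Set V) (u : V) : Set V :=
  {x | x ∈ closedNbhd G u ∧ ∀ d ∈ D, d ≠ u → x ∉ closedNbhd G d}

/-- A set `D` is open irredundant if every vertex of `D` has an external
private neighbor. -/
def IsOpenIrred (G : SimpleGraph V) (D : Set V) : Prop :=
  ∀ u ∈ D, ∃ x ∈ G.neighborSet u, ∀ d ∈ D, d ≠ u → x ∉ closedNbhd G d

/-!
If `u, v ∈ D` are adjacent, pick a vertex `h` of `H` that is not a support vertex (one exists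
since `H` is connected of order at least 3). Then `(D × V(H)) - {(u, h)}` still dominates `G × H`:
`(u, h)` is dominated by `(v, h')` for any neighbour `h'` of `h`, and a vertex `(x, y)` with
`x ∉ D` is dominated by `(d, z)` with `d ∈ D` adjacent to `x` and `z ≠ h` adjacent to `y`.
Conversely, an independent dominating set is always minimal, and `D × V(H)` is independent in
`G × H` whenever `D` is independent in `G`.
-/

lemma mem_closedNbhd_iff {G : SimpleGraph V} {u x : V} :
    x ∈ closedNbhd G u ↔ x = u ∨ G.Adj u x := by
  simp [closedNbhd]

lemma IsDomSet.exists_adj_of_notMem {G : SimpleGraph V} {D : Set V} (hD : IsDomSet G D) {x : V}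
    (hx : x ∉ D) : ∃ d ∈ D, G.Adj d x := by
  obtain ⟨d, hd, hdx⟩ := hD x
  rcases mem_closedNbhd_iff.mp hdx with rfl | hadj
  · exact absurd hd hx
  · exact ⟨d, hd, hadj⟩

lemma IsMinimalDomSet.not_isDomSet_diff_singleton {G : SimpleGraph V} {D : Set V}
    (hD : IsMinimalDomSet G D) {p : V} (hp : p ∈ D) : ¬ IsDomSet G (D \ {p}) := fun hdom =>
  (((hD.2 _ Set.sdiff_subset hdom).symm ▸ hp : p ∈ D \ {p})).2 rfl

lemma IsIndep.isMinimalDomSet {G : SimpleGraph V} {D : Set V} (hI : IsIndep G D)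
    (hD : IsDomSet G D) : IsMinimalDomSet G D := by
  refine ⟨hD, fun D' hsub hD' => hsub.antisymm fun u hu => ?_⟩
  obtain ⟨d, hd, hud⟩ := hD' u
  rcases mem_closedNbhd_iff.mp hud with rfl | hadj
  · exact hd
  · exact absurd hadj (hI d (hsub hd) u hu)

lemma IsIndep.prod_tensorProd {W : Type*} {G : SimpleGraph V} {A : Set V} (hA : IsIndep G A)
    (H : SimpleGraph W) (B : Set W) : IsIndep (tensorProd G H) (A ×ˢ B) :=
  fun p hp q hq hpq => hA p.1 hp.1 q.1 hq.1 hpq.1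

lemma IsDomSet.prod_univ_tensorProd {W : Type*} {G : SimpleGraph V} {D : Set V}
    (hD : IsDomSet G D) {H : SimpleGraph W} (hH : ∀ y, ∃ z, H.Adj y z) :
    IsDomSet (tensorProd G H) (D ×ˢ Set.univ) := by
  rintro ⟨x, y⟩
  by_cases hx : x ∈ D
  · exact ⟨(x, y), ⟨hx, trivial⟩, mem_closedNbhd_iff.mpr (Or.inl rfl)⟩
  · obtain ⟨d, hd, hdx⟩ := hD.exists_adj_of_notMem hx
    obtain ⟨z, hyz⟩ := hH y
    exact ⟨(d, z), ⟨hd, trivial⟩, mem_closedNbhd_iff.mpr (Or.inr ⟨hdx, hyz.symm⟩)⟩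

def SimpleGraph.IsSupportVertex (G : SimpleGraph V) (v : V) : Prop :=
  ∃ w, G.neighborSet w = {v}

lemma SimpleGraph.exists_adj_ne_of_not_isSupportVertex {G : SimpleGraph V} {v : V}
    (hv : ¬ G.IsSupportVertex v) {y : V} (hy : ∃ z, G.Adj y z) :
    ∃ z, G.Adj y z ∧ z ≠ v := by
  by_contra! hyv
  obtain ⟨z, hyz⟩ := hy
  exact hv ⟨y, Set.eq_singleton_iff_unique_mem.mpr ⟨hyv z hyz ▸ hyz, hyv⟩⟩

lemma SimpleGraph.Connected.exists_not_isSupportVertex [Fintype V] {G : SimpleGraph V}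
    (hG : G.Connected) (hV : 3 ≤ Fintype.card V) : ∃ v, ¬ G.IsSupportVertex v := by
  classical
  by_contra! hsupp
  obtain ⟨a⟩ := hG.nonempty
  obtain ⟨b, hb⟩ := hsupp a
  obtain ⟨c, hc⟩ := hsupp b
  have hca : c = a := by
    have : c ∈ G.neighborSet b := (hc ▸ Set.mem_singleton b : b ∈ G.neighborSet c).symm
    rwa [hb] at this
  subst hca
  -- `b` and `c` are each other's only neighbours, so `{c, b}` is a whole component.
  have hclosed : ∀ x ∈ ({c, b} : Set V), ∀ y, G.Adj x y → y ∈ ({c, b} : Set V) := by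
    rintro x (rfl | rfl) y hxy
    · have hy : y ∈ G.neighborSet x := hxy
      rw [hc] at hy
      exact Or.inr hy
    · have hy : y ∈ G.neighborSet x := hxy
      rw [hb] at hy
      exact Or.inl hy
  obtain ⟨w, -, hw⟩ := Finset.exists_mem_notMem_of_card_lt_card
    (s := {c, b}) (t := Finset.univ) (Finset.card_le_two.trans_lt (by rw [Finset.card_univ]; omega))
  obtain ⟨p⟩ := hG.preconnected c w
  obtain ⟨d, -, hd, hd'⟩ := p.exists_boundary_dart {c, b} (Or.inl rfl) (by simpa using hw)
  exact hd' (hclosed _ hd _ d.adj)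

lemma IsDomSet.prod_univ_diff_singleton_tensorProd {W : Type*} {G : SimpleGraph V} {D : Set V}
    (hD : IsDomSet G D) {H : SimpleGraph W} (hH : ∀ y, ∃ z, H.Adj y z) {u v : V} (hv : v ∈ D)
    (huv : G.Adj u v) {h : W} (hh : ¬ H.IsSupportVertex h) :
    IsDomSet (tensorProd G H) ((D ×ˢ Set.univ) \ {(u, h)}) := by
  rintro ⟨x, y⟩
  by_cases hx : x ∈ D
  · by_cases hxy : (x, y) = (u, h)
    · obtain ⟨z, hz⟩ := hH h
      obtain ⟨rfl, rfl⟩ := Prod.mk.inj hxy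
      refine ⟨(v, z), ⟨⟨hv, trivial⟩, fun hvz => huv.ne (Prod.mk.inj hvz).1.symm⟩, ?_⟩
      exact mem_closedNbhd_iff.mpr (Or.inr ⟨huv.symm, hz.symm⟩)
    · exact ⟨(x, y), ⟨⟨hx, trivial⟩, hxy⟩, mem_closedNbhd_iff.mpr (Or.inl rfl)⟩
  · obtain ⟨d, hd, hdx⟩ := hD.exists_adj_of_notMem hx
    obtain ⟨z, hyz, hzh⟩ := exists_adj_ne_of_not_isSupportVertex hh (hH y)
    refine ⟨(d, z), ⟨⟨hd, trivial⟩, fun hdz => hzh (Prod.mk.inj hdz).2⟩, ?_⟩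
    exact mem_closedNbhd_iff.mpr (Or.inr ⟨hdx, hyz.symm⟩)

theorem stmt_8_general {α β : Type*} [Fintype β]
    (G : SimpleGraph α) (H : SimpleGraph β)
    (hH : H.Connected)
    (hβ : 3 ≤ Fintype.card β)
    (D : Set α) (hD : IsMinimalDomSet G D) :
    IsMinimalDomSet (tensorProd G H) (D ×ˢ (Set.univ : Set β)) ↔ IsIndep G D := by
  have : Nontrivial β := Fintype.one_lt_card_iff_nontrivial.mp (by omega)
  have hHadj : ∀ y, ∃ z, H.Adj y z := hH.preconnected.exists_adj_of_nontrivial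
  constructor
  · intro hmin u hu v hv huv
    obtain ⟨h, hh⟩ := hH.exists_not_isSupportVertex hβ
    exact hmin.not_isDomSet_diff_singleton (p := (u, h)) ⟨hu, trivial⟩
      (hD.1.prod_univ_diff_singleton_tensorProd hHadj hv huv hh)
  · intro hind
    exact (hind.prod_tensorProd H _).isMinimalDomSet (hD.1.prod_univ_tensorProd hHadj)

/-- For connected graphs of order at least `3` and a minimal dominating set `D`
of `G`, the set `D × V(H)` is a minimal dominating set of `G × H` iff `D` is
independent in `G`. -/
theorem stmt_8 {α β : Type*} [Fintype α] [Fintype β]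
    (G : SimpleGraph α) (H : SimpleGraph β)
    (hG : G.Connected) (hH : H.Connected)
    (hα : 3 ≤ Fintype.card α) (hβ : 3 ≤ Fintype.card β)
    (D : Set α) (hD : IsMinimalDomSet G D) :
    IsMinimalDomSet (tensorProd G H) (D ×ˢ (Set.univ : Set β)) ↔ IsIndep G D :=
  stmt_8_general G H hH hβ D hD
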